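/- arXiv:2308.07667 — 6 statements merged into one kernel-verified Lean document; each statement's English description precedes it below -/
import Mathlib

section
/- For every finite simple graph G, every minimal dominating set of G is a maximal irredundant set of G. -/
open Finset

variable {V : Type*}

/-- Closed neighborhood N[v]. -/
def closedNbhd (G : SimpleGraph V) (v : V) : Set V := insert v (G.neighborSet v)

/-- S is a dominating set. -/
def IsDomSet (G : SimpleGraph V) (S : Finset V) : Prop :=
  ∀ v : V, v ∈ S ∨ ∃ u ∈ S, G.Adj u v

/-- S is an independent (stable) set. -/
def IsIndepSet (G : SimpleGraph V) (S : Finset V) : Prop :=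
  ∀ u ∈ S, ∀ v ∈ S, ¬ G.Adj u v

/-- S is irredundant: every vertex of S has a private neighbor. -/
def IsIrredSet (G : SimpleGraph V) (S : Finset V) : Prop :=
  ∀ v ∈ S, ∃ w, w ∈ closedNbhd G v ∧ ∀ u ∈ S, u ≠ v → w ∉ closedNbhd G u

/-- S is open irredundant: every vertex of S has a private neighbor outside S. -/
def IsOpenIrredSet (G : SimpleGraph V) (S : Finset V) : Prop :=
  ∀ v ∈ S, ∃ w, w ∉ S ∧ w ∈ closedNbhd G v ∧ ∀ u ∈ S, u ≠ v → w ∉ closedNbhd G u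

/-- S is a maximal independent set. -/
def MaxIndepSet (G : SimpleGraph V) (S : Finset V) : Prop :=
  IsIndepSet G S ∧ ∀ T : Finset V, IsIndepSet G T → S ⊆ T → T = S

/-- S is a minimal dominating set. -/
def MinDomSet (G : SimpleGraph V) (S : Finset V) : Prop :=
  IsDomSet G S ∧ ∀ T : Finset V, T ⊆ S → IsDomSet G T → T = S

/-- S is a maximal irredundant set. -/
def MaxIrredSet (G : SimpleGraph V) (S : Finset V) : Prop :=
  IsIrredSet G S ∧ ∀ T : Finset V, IsIrredSet G T → S ⊆ T → T = S

/-- Domination number γ(G). -/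
noncomputable def gammaNum (G : SimpleGraph V) [Fintype V] : ℕ :=
  sInf {k | ∃ S : Finset V, IsDomSet G S ∧ S.card = k}

/-- Lower irredundance number ir(G). -/
noncomputable def irNum (G : SimpleGraph V) [Fintype V] : ℕ :=
  sInf {k | ∃ S : Finset V, MaxIrredSet G S ∧ S.card = k}

/-- Independent domination number i(G). -/
noncomputable def iNum (G : SimpleGraph V) [Fintype V] : ℕ :=
  sInf {k | ∃ S : Finset V, MaxIndepSet G S ∧ S.card = k}

/-- Independence number α(G). -/
noncomputable def alphaNum (G : SimpleGraph V) [Fintype V] : ℕ :=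
  sSup {k | ∃ S : Finset V, IsIndepSet G S ∧ S.card = k}

/-- Upper domination number Γ(G). -/
noncomputable def upperGammaNum (G : SimpleGraph V) [Fintype V] : ℕ :=
  sSup {k | ∃ S : Finset V, MinDomSet G S ∧ S.card = k}

/-- Upper irredundance number IR(G). -/
noncomputable def IRNum (G : SimpleGraph V) [Fintype V] : ℕ :=
  sSup {k | ∃ S : Finset V, IsIrredSet G S ∧ S.card = k}

/-- Open irredundance number OIR(G). -/
noncomputable def OIRNum (G : SimpleGraph V) [Fintype V] : ℕ :=
  sSup {k | ∃ S : Finset V, IsOpenIrredSet G S ∧ S.card = k}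

/-- IS(v): maximum size of an independent set containing v. -/
noncomputable def ISv (G : SimpleGraph V) [Fintype V] (v : V) : ℕ :=
  sSup {k | ∃ S : Finset V, IsIndepSet G S ∧ v ∈ S ∧ S.card = k}

/-- IRS(v): maximum size of an irredundant set containing v. -/
noncomputable def IRSv (G : SimpleGraph V) [Fintype V] (v : V) : ℕ :=
  sSup {k | ∃ S : Finset V, IsIrredSet G S ∧ v ∈ S ∧ S.card = k}

/-- Independence saturation number IS(G). -/
noncomputable def ISNum (G : SimpleGraph V) [Fintype V] : ℕ := ⨅ v : V, ISv G v

/-- Irredundance saturation number IRS(G). -/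
noncomputable def IRSNum (G : SimpleGraph V) [Fintype V] : ℕ := ⨅ v : V, IRSv G v

/-
A vertex of a dominating set without a private neighbour can be dropped, so a minimal dominating
set is irredundant. Conversely, a vertex added to a dominating set has no private neighbour: each
vertex of its closed neighbourhood is already dominated by the old set. So no proper superset of a
dominating set is irredundant.
-/

theorem isDomSet_iff_exists_mem_closedNbhd {G : SimpleGraph V} {S : Finset V} :
    IsDomSet G S ↔ ∀ w, ∃ u ∈ S, w ∈ closedNbhd G u := by
  refine forall_congr' fun w => ⟨?_, ?_⟩
  · rintro (hw | ⟨u, hu, huw⟩)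
    · exact ⟨w, hw, Set.mem_insert w _⟩
    · exact ⟨u, hu, Or.inr huw⟩
  · rintro ⟨u, hu, rfl | huw⟩
    · exact Or.inl hu
    · exact Or.inr ⟨u, hu, huw⟩

theorem IsDomSet.erase_of_forall_not_private {G : SimpleGraph V} {S : Finset V} {v : V}
    [DecidableEq V] (hS : IsDomSet G S)
    (hv : ∀ w ∈ closedNbhd G v, ∃ u ∈ S, u ≠ v ∧ w ∈ closedNbhd G u) :
    IsDomSet G (S.erase v) := by
  rw [isDomSet_iff_exists_mem_closedNbhd] at hS ⊢
  intro w
  obtain ⟨u, hu, hwu⟩ := hS w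
  by_cases huv : u = v
  · obtain ⟨u', hu', hu'v, hwu'⟩ := hv w (huv ▸ hwu)
    exact ⟨u', mem_erase.mpr ⟨hu'v, hu'⟩, hwu'⟩
  · exact ⟨u, mem_erase.mpr ⟨huv, hu⟩, hwu⟩

theorem MinDomSet.isIrredSet {G : SimpleGraph V} {S : Finset V} (hS : MinDomSet G S) :
    IsIrredSet G S := by
  classical
  intro v hv
  by_contra! hnot
  have hdom : IsDomSet G (S.erase v) := hS.1.erase_of_forall_not_private hnot
  exact notMem_erase v S ((hS.2 _ (erase_subset v S) hdom).ge hv)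

theorem IsDomSet.eq_of_isIrredSet_of_subset {G : SimpleGraph V} {S T : Finset V}
    (hS : IsDomSet G S) (hT : IsIrredSet G T) (hST : S ⊆ T) : T = S := by
  refine Subset.antisymm (fun x hx => ?_) hST
  by_contra hxS
  obtain ⟨w, -, hw⟩ := hT x hx
  obtain ⟨u, hu, hwu⟩ := isDomSet_iff_exists_mem_closedNbhd.mp hS w
  exact hw u (hST hu) (fun hux => hxS (hux ▸ hu)) hwu

theorem minDom_is_maxIrred_general (G : SimpleGraph V) (S : Finset V)
    (hS : MinDomSet G S) : MaxIrredSet G S :=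
  ⟨hS.isIrredSet, fun _ hT hST => hS.1.eq_of_isIrredSet_of_subset hT hST⟩

theorem minDom_is_maxIrred [Fintype V] (G : SimpleGraph V) (S : Finset V)
    (hS : MinDomSet G S) : MaxIrredSet G S :=
  minDom_is_maxIrred_general G S hS
end

section
/- For every finite simple graph G with at least one vertex, γ(G) ≤ 2·ir(G) − 1, where γ is the domination number and ir is the lower irredundance number. -/
open Finset

variable {V : Type*}

/-!
Take a maximal irredundant set `X` of size `ir(G)` and a private neighbour `f x` of each
`x ∈ X`. If `X` does not dominate, pick an undominated `u`; since `X ∪ {u}` is not irredundant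
and `u` is its own private neighbour there, `u` annihilates some `x₀ ∈ X`: every private
neighbour of `x₀` lies in `N[u]`. Then `(X \ {x₀}) ∪ f(X)`, of size at most `2|X| - 1`,
dominates. A vertex `z` it missed is either in `X` or, by maximality of `X`, has
`N[z] ⊆ N[X]` (it cannot annihilate any `x`, as then `f x ∈ N[z]`). Either way `z` is a
private neighbour of `x₀`, and then `u ∈ N[z] ⊆ N[X]`.
-/

def closedNbhdSet (G : SimpleGraph V) (S : Finset V) : Set V := ⋃ v ∈ S, closedNbhd G v

def IsPrivateNbr (G : SimpleGraph V) (S : Finset V) (v w : V) : Prop :=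
  w ∈ closedNbhd G v ∧ ∀ u ∈ S, u ≠ v → w ∉ closedNbhd G u

def Annihilates (G : SimpleGraph V) (S : Finset V) (z v : V) : Prop :=
  ∀ w, IsPrivateNbr G S v w → w ∈ closedNbhd G z

section

variable {G : SimpleGraph V} {S X : Finset V} {u v w z : V}

lemma self_mem_closedNbhd (v : V) : v ∈ closedNbhd G v :=
  Set.mem_insert _ _

lemma mem_closedNbhd_comm : u ∈ closedNbhd G v ↔ v ∈ closedNbhd G u := by
  simp only [closedNbhd, Set.mem_insert_iff, SimpleGraph.mem_neighborSet]
  rw [eq_comm, G.adj_comm]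

lemma mem_closedNbhdSet : w ∈ closedNbhdSet G S ↔ ∃ v ∈ S, w ∈ closedNbhd G v := by
  simp [closedNbhdSet]

lemma mem_closedNbhdSet_of_mem (hv : v ∈ S) (hw : w ∈ closedNbhd G v) : w ∈ closedNbhdSet G S :=
  mem_closedNbhdSet.2 ⟨v, hv, hw⟩

lemma isDomSet_iff : IsDomSet G S ↔ ∀ v, v ∈ closedNbhdSet G S := by
  simp [IsDomSet, mem_closedNbhdSet, closedNbhd, and_or_left, exists_or]

lemma isIrredSet_iff : IsIrredSet G S ↔ ∀ v ∈ S, ∃ w, IsPrivateNbr G S v w :=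
  Iff.rfl

lemma isIrredSet_singleton (v : V) : IsIrredSet G {v} := by
  intro x hx
  refine ⟨x, self_mem_closedNbhd x, fun u hu hux => ?_⟩
  rw [Finset.mem_singleton] at hx hu
  exact absurd (hu.trans hx.symm) hux

lemma isPrivateNbr_of_notMem_closedNbhdSet_erase [DecidableEq V] (hw : w ∈ closedNbhd G v)
    (hw' : w ∉ closedNbhdSet G (S.erase v)) : IsPrivateNbr G S v w :=
  ⟨hw, fun _ hu huv hwu => hw' (mem_closedNbhdSet_of_mem (Finset.mem_erase.2 ⟨huv, hu⟩) hwu)⟩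

lemma IsIrredSet.insert [DecidableEq V] (hS : ∀ v ∈ S, ¬ Annihilates G S z v)
    (hz : ¬ closedNbhd G z ⊆ closedNbhdSet G S) : IsIrredSet G (insert z S) := by
  intro v hv
  rcases Finset.mem_insert.1 hv with rfl | hvS
  · obtain ⟨w, hwv, hwS⟩ := Set.not_subset.1 hz
    refine ⟨w, hwv, fun u hu huv hwu => hwS (mem_closedNbhdSet_of_mem ?_ hwu)⟩
    exact (Finset.mem_insert.1 hu).resolve_left huv
  · obtain ⟨w, ⟨hwv, hwS⟩, hwz⟩ := not_forall₂.1 (hS v hvS)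
    refine ⟨w, hwv, fun u hu huv => ?_⟩
    rcases Finset.mem_insert.1 hu with rfl | huS
    exacts [hwz, hwS u huS huv]

lemma MaxIrredSet.annihilates_or_closedNbhd_subset (hX : MaxIrredSet G X) (hz : z ∉ X) :
    (∃ x ∈ X, Annihilates G X z x) ∨ closedNbhd G z ⊆ closedNbhdSet G X := by
  classical
  by_contra! ⟨hann, hsub⟩
  refine hz ((hX.2 _ (IsIrredSet.insert hann hsub) (Finset.subset_insert z X)) ▸ ?_)
  exact Finset.mem_insert_self z X

lemma MaxIrredSet.nonempty [Nonempty V] (hX : MaxIrredSet G X) : X.Nonempty := by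
  rw [Finset.nonempty_iff_ne_empty]
  rintro rfl
  obtain ⟨v⟩ := ‹Nonempty V›
  exact Finset.singleton_ne_empty v (hX.2 {v} (isIrredSet_singleton v) (Finset.empty_subset _))

lemma exists_maxIrredSet [Finite V] (G : SimpleGraph V) : ∃ X, MaxIrredSet G X := by
  obtain ⟨X, hX⟩ := (Set.toFinite {S : Finset V | IsIrredSet G S}).exists_maximal
    ⟨∅, fun _ h => absurd h (Finset.notMem_empty _)⟩
  exact ⟨X, hX.1, fun T hT hXT => (hX.2 hT hXT).antisymm hXT⟩

lemma isDomSet_erase_union_image [DecidableEq V] (hX : MaxIrredSet G X) {f : V → V}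
    (hf : ∀ x ∈ X, IsPrivateNbr G X x (f x)) (hu : u ∉ closedNbhdSet G X) {x₀ : V}
    (hux₀ : Annihilates G X u x₀) : IsDomSet G (X.erase x₀ ∪ X.image f) := by
  refine isDomSet_iff.2 fun z => by_contra fun hz => ?_
  have hz_erase : z ∉ closedNbhdSet G (X.erase x₀) := fun h => hz <| by
    obtain ⟨v, hv, hzv⟩ := mem_closedNbhdSet.1 h
    exact mem_closedNbhdSet_of_mem (Finset.mem_union_left _ hv) hzv
  have hz_mem_or_sub : z ∈ X ∨ closedNbhd G z ⊆ closedNbhdSet G X := by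
    refine (em _).imp_right fun hzX => ?_
    refine (hX.annihilates_or_closedNbhd_subset hzX).resolve_left ?_
    rintro ⟨x, hx, hann⟩
    exact hz (mem_closedNbhdSet_of_mem (Finset.mem_union_right _ (Finset.mem_image_of_mem f hx))
      (mem_closedNbhd_comm.1 (hann _ (hf x hx))))
  have hz_dom : z ∈ closedNbhdSet G X := hz_mem_or_sub.elim
    (fun hzX => mem_closedNbhdSet_of_mem hzX (self_mem_closedNbhd z))
    (fun hsub => hsub (self_mem_closedNbhd z))
  obtain ⟨x, hx, hzx⟩ := mem_closedNbhdSet.1 hz_dom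
  obtain rfl : x = x₀ := by_contra fun hxx₀ =>
    hz_erase (mem_closedNbhdSet_of_mem (Finset.mem_erase.2 ⟨hxx₀, hx⟩) hzx)
  have huz : u ∈ closedNbhd G z :=
    mem_closedNbhd_comm.1 (hux₀ z (isPrivateNbr_of_notMem_closedNbhdSet_erase hzx hz_erase))
  exact hu (hz_mem_or_sub.elim (fun hzX => mem_closedNbhdSet_of_mem hzX huz) (· huz))

lemma MaxIrredSet.exists_isDomSet_card_le [DecidableEq V] (hX : MaxIrredSet G X)
    (hne : X.Nonempty) : ∃ D, IsDomSet G D ∧ D.card ≤ 2 * X.card - 1 := by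
  have hpos := hne.card_pos
  by_cases hdom : IsDomSet G X
  · exact ⟨X, hdom, by omega⟩
  obtain ⟨u, hu⟩ : ∃ u, u ∉ closedNbhdSet G X := by simpa [isDomSet_iff] using hdom
  obtain ⟨x₀, hx₀, hux₀⟩ : ∃ x₀ ∈ X, Annihilates G X u x₀ :=
    (hX.annihilates_or_closedNbhd_subset fun huX => hu
      (mem_closedNbhdSet_of_mem huX (self_mem_closedNbhd u))).resolve_right
      fun hsub => hu (hsub (self_mem_closedNbhd u))
  choose! f hf using isIrredSet_iff.1 hX.1
  refine ⟨X.erase x₀ ∪ X.image f, isDomSet_erase_union_image hX hf hu hux₀, ?_⟩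
  calc (X.erase x₀ ∪ X.image f).card
      ≤ (X.erase x₀).card + (X.image f).card := Finset.card_union_le _ _
    _ ≤ (X.card - 1) + X.card :=
      add_le_add (Finset.card_erase_of_mem hx₀).le Finset.card_image_le
    _ = 2 * X.card - 1 := by omega

lemma exists_maxIrredSet_card_eq_irNum [Fintype V] (G : SimpleGraph V) :
    ∃ X, MaxIrredSet G X ∧ X.card = irNum G := by
  obtain ⟨X, hX⟩ := exists_maxIrredSet G
  exact Nat.sInf_mem (s := {k | ∃ S, MaxIrredSet G S ∧ S.card = k}) ⟨X.card, X, hX, rfl⟩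

lemma gammaNum_le_card [Fintype V] {D : Finset V} (hD : IsDomSet G D) :
    gammaNum G ≤ D.card :=
  Nat.sInf_le (s := {k | ∃ S, IsDomSet G S ∧ S.card = k}) ⟨D, hD, rfl⟩

end

theorem gamma_le_two_ir_sub_one [Fintype V] [Nonempty V] (G : SimpleGraph V) :
    gammaNum G ≤ 2 * irNum G - 1 := by
  classical
  obtain ⟨X, hX, hcard⟩ := exists_maxIrredSet_card_eq_irNum G
  obtain ⟨D, hD, hle⟩ := hX.exists_isDomSet_card_le hX.nonempty
  exact hcard ▸ (gammaNum_le_card hD).trans hle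
end

section
/- Let CK_n be the graph obtained by taking two disjoint copies of K_n and adding a perfect matching between them. Then the upper domination number Γ(CK_n) equals n. -/
open Finset

variable {V : Type*}

/-- CK_n: two disjoint copies of K_n joined by a perfect matching (a_i = inl i, b_i = inr i). -/
def CK (n : ℕ) : SimpleGraph (Fin n ⊕ Fin n) :=
  SimpleGraph.fromRel (fun x y => match x, y with
    | .inl _, .inl _ => True
    | .inr _, .inr _ => True
    | .inl i, .inr j => i = j
    | _, _ => False)

/-
A minimal dominating set of `CK_n` either lies in one of the two cliques, hence has at most `n`
vertices, or contains some `a_i` and some `b_j`. Since `{a_i, b_j}` already dominates, minimality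
forces `S = {a_i, b_j}`, and `{a_i}` alone must fail to dominate, which happens only if `n ≥ 2`.
Conversely one clique `{a_1, …, a_n}` is a minimal dominating set: `b_i` is dominated only by `a_i`.
-/

theorem upperGammaNum_eq_of_forall_card_le {G : SimpleGraph V} [Fintype V] {S : Finset V} {k : ℕ}
    (hS : MinDomSet G S) (hcard : #S = k) (hle : ∀ T : Finset V, MinDomSet G T → #T ≤ k) :
    upperGammaNum G = k :=
  IsGreatest.csSup_eq ⟨⟨S, hS, hcard⟩, by rintro _ ⟨T, hT, rfl⟩; exact hle T hT⟩

namespace CK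

variable {n : ℕ} {i j : Fin n}

@[simp] theorem adj_inl_inl : (CK n).Adj (.inl i) (.inl j) ↔ i ≠ j := by
  simp [CK]

@[simp] theorem adj_inr_inr : (CK n).Adj (.inr i) (.inr j) ↔ i ≠ j := by
  simp [CK]

@[simp] theorem adj_inl_inr : (CK n).Adj (.inl i) (.inr j) ↔ i = j := by
  simp [CK]

theorem isDomSet_pair (i j : Fin n) : IsDomSet (CK n) {.inl i, .inr j} := by
  rintro (k | k)
  · by_cases hk : k = i <;> simp [hk, Ne.symm]
  · by_cases hk : k = j <;> simp [hk, Ne.symm]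

theorem isDomSet_singleton_inl [Subsingleton (Fin n)] (i : Fin n) :
    IsDomSet (CK n) {.inl i} := by
  rintro (k | k) <;> simp [Subsingleton.elim k i]

theorem minDomSet_map_inl : MinDomSet (CK n) (univ.map .inl) := by
  refine ⟨fun v => ?_, fun T hTS hT => hTS.antisymm fun v hv => ?_⟩
  · rcases v with k | k
    · simp
    · exact .inr ⟨.inl k, by simp⟩
  · obtain ⟨i, -, rfl⟩ := mem_map.1 hv
    rcases hT (.inr i) with hi | ⟨u, hu, hadj⟩
    · simpa using hTS hi
    · obtain ⟨k, -, rfl⟩ := mem_map.1 (hTS hu)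
      rwa [(adj_inl_inr.1 hadj : k = i)] at hu

theorem eq_pair_of_minDomSet {S : Finset (Fin n ⊕ Fin n)} (hS : MinDomSet (CK n) S)
    (hi : .inl i ∈ S) (hj : .inr j ∈ S) : S = {.inl i, .inr j} :=
  (hS.2 _ (insert_subset hi (singleton_subset_iff.2 hj)) (isDomSet_pair i j)).symm

theorem two_le_of_minDomSet {S : Finset (Fin n ⊕ Fin n)} (hS : MinDomSet (CK n) S)
    (hi : .inl i ∈ S) (hj : .inr j ∈ S) : 2 ≤ n := by
  by_contra! hn
  have : Subsingleton (Fin n) := Fin.subsingleton_iff_le_one.2 (by omega)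
  have hSi := hS.2 _ (singleton_subset_iff.2 hi) (isDomSet_singleton_inl i)
  simp [← hSi] at hj

theorem card_le_of_minDomSet {S : Finset (Fin n ⊕ Fin n)} (hS : MinDomSet (CK n) S) : #S ≤ n := by
  rw [← card_toLeft_add_card_toRight]
  by_cases hL : S.toLeft = ∅
  · simpa [hL] using card_le_univ S.toRight
  by_cases hR : S.toRight = ∅
  · simpa [hR] using card_le_univ S.toLeft
  obtain ⟨i, hi⟩ := nonempty_iff_ne_empty.2 hL
  obtain ⟨j, hj⟩ := nonempty_iff_ne_empty.2 hR
  rw [mem_toLeft] at hi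
  rw [mem_toRight] at hj
  rw [card_toLeft_add_card_toRight, eq_pair_of_minDomSet hS hi hj, card_pair Sum.inl_ne_inr]
  exact two_le_of_minDomSet hS hi hj

end CK

theorem upperGamma_CK (n : ℕ) : upperGammaNum (CK n) = n :=
  upperGammaNum_eq_of_forall_card_le CK.minDomSet_map_inl (by simp) fun _ => CK.card_le_of_minDomSet
end

section
/- Let F_n be the graph obtained from n disjoint edges by adding one universal vertex adjacent to all 2n endpoints. Then the open irredundance number OIR(F_n) equals n. -/
open Finset

variable {V : Type*}

/-- F_n: n disjoint edges x_i y_i plus a universal vertex c = `none`;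
`some (i, b)` are the endpoints x_i (b = false) and y_i (b = true). -/
def Fgraph (n : ℕ) : SimpleGraph (Option (Fin n × Bool)) :=
  SimpleGraph.fromRel (fun x y => match x, y with
    | none, some _ => True
    | some (i, _), some (j, _) => i = j
    | _, _ => False)


/-! In `F_n` the closed neighborhoods of `x_i` and `y_i` coincide, and that of the centre `c` is
everything. A vertex of an irredundant set cannot have its closed neighborhood inside that of
another member (its private neighbor would be shared), so an open irredundant set either is `{c}`
(and then `n ≥ 1`, as `c` needs a private neighbor besides itself) or meets each edge `x_i y_i` at
most once. The set `{x_1, …, x_n}`, with private neighbors `y_i`, attains `n`. -/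

section Irredundance

variable {G : SimpleGraph V} {S : Finset V}

lemma mem_closedNbhd {v w : V} : w ∈ closedNbhd G v ↔ w = v ∨ G.Adj v w := by
  simp [closedNbhd, SimpleGraph.mem_neighborSet]

lemma IsOpenIrredSet.isIrredSet (hS : IsOpenIrredSet G S) : IsIrredSet G S := fun v hv =>
  let ⟨w, _, hwv, hpriv⟩ := hS v hv
  ⟨w, hwv, hpriv⟩

lemma IsIrredSet.not_closedNbhd_subset (hS : IsIrredSet G S) {u v : V} (hu : u ∈ S) (hv : v ∈ S)
    (huv : u ≠ v) : ¬ closedNbhd G u ⊆ closedNbhd G v := fun hsub =>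
  let ⟨_, hwu, hpriv⟩ := hS u hu
  hpriv v hv huv.symm (hsub hwu)

lemma IsIrredSet.subset_singleton_of_closedNbhd_eq_univ (hS : IsIrredSet G S) {u : V}
    (hu : u ∈ S) (huniv : closedNbhd G u = Set.univ) : S ⊆ {u} := fun _ hv =>
  Finset.mem_singleton.mpr <| by_contra fun hvu =>
    hS.not_closedNbhd_subset hv hu hvu (huniv ▸ Set.subset_univ _)

lemma IsIrredSet.injOn_of_closedNbhd_eq {W : Type*} (hS : IsIrredSet G S) {f : V → W}
    (hf : ∀ u v, f u = f v → closedNbhd G u = closedNbhd G v) : Set.InjOn f S :=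
  fun u hu v hv huv => by_contra fun hne =>
    hS.not_closedNbhd_subset hu hv hne (hf u v huv).subset

end Irredundance

namespace Fgraph

variable {n : ℕ}

lemma adj_none_some (p : Fin n × Bool) : (Fgraph n).Adj none (some p) := by
  simp [Fgraph]

lemma adj_some_some {p q : Fin n × Bool} : (Fgraph n).Adj (some p) (some q) ↔ p ≠ q ∧ p.1 = q.1 := by
  simp only [Fgraph, SimpleGraph.fromRel_adj, ne_eq, Option.some.injEq, eq_comm (a := q.1),
    or_self]

lemma closedNbhd_none : closedNbhd (Fgraph n) none = Set.univ := by
  ext (_ | p)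
  · simp [closedNbhd]
  · simpa using mem_closedNbhd.mpr (Or.inr (adj_none_some p))

lemma mem_closedNbhd_some {p : Fin n × Bool} {w : Option (Fin n × Bool)} :
    w ∈ closedNbhd (Fgraph n) (some p) ↔ ∀ q, w = some q → q.1 = p.1 := by
  rw [mem_closedNbhd]
  rcases w with _ | q
  · simpa using (adj_none_some p).symm
  · simp only [Option.some.injEq, forall_eq', adj_some_some]
    grind

lemma closedNbhd_eq_of_map_fst_eq {u v : Option (Fin n × Bool)}
    (h : u.map Prod.fst = v.map Prod.fst) : closedNbhd (Fgraph n) u = closedNbhd (Fgraph n) v := by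
  rcases u with _ | p <;> rcases v with _ | q <;> simp only [Option.map_none, Option.map_some,
    reduceCtorEq, Option.some.injEq] at h
  · rfl
  · ext w
    simp only [mem_closedNbhd_some, h]

lemma card_le_of_isOpenIrredSet {S : Finset (Option (Fin n × Bool))}
    (hS : IsOpenIrredSet (Fgraph n) S) : S.card ≤ n := by
  by_cases hc : none ∈ S
  · have hsub : S ⊆ {none} :=
      hS.isIrredSet.subset_singleton_of_closedNbhd_eq_univ hc closedNbhd_none
    obtain ⟨w, hwS, -, -⟩ := hS none hc
    obtain ⟨q, rfl⟩ : ∃ q, w = some q := Option.ne_none_iff_exists'.mp fun h => hwS (h ▸ hc)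
    calc S.card ≤ 1 := Finset.card_le_one_iff_subset_singleton.mpr ⟨none, hsub⟩
      _ ≤ n := q.1.pos
  · have hmaps : ∀ v ∈ S, v.map Prod.fst ∈ Finset.univ.erase none := by
      intro v hv
      simpa using fun h : v = none => hc (h ▸ hv)
    calc S.card ≤ (Finset.univ.erase none).card := Finset.card_le_card_of_injOn _ hmaps
          (hS.isIrredSet.injOn_of_closedNbhd_eq fun _ _ => closedNbhd_eq_of_map_fst_eq)
      _ = n := by simp

lemma isOpenIrredSet_lefts :
    IsOpenIrredSet (Fgraph n) (Finset.univ.image fun i => some (i, false)) := by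
  simp only [IsOpenIrredSet, Finset.mem_image, Finset.mem_univ, true_and, forall_exists_index,
    forall_apply_eq_imp_iff]
  intro i
  refine ⟨some (i, true), by simp, mem_closedNbhd_some.mpr (by simp), fun j hji hmem => ?_⟩
  exact hji (by simpa using (mem_closedNbhd_some.mp hmem (i, true) rfl).symm)

lemma card_lefts : (Finset.univ.image fun i : Fin n => some (i, false)).card = n := by
  rw [Finset.card_image_of_injective _ fun i j h => by simpa using h, Finset.card_univ,
    Fintype.card_fin]

end Fgraph

theorem OIR_Fgraph (n : ℕ) : OIRNum (Fgraph n) = n := by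
  refine IsGreatest.csSup_eq ⟨⟨_, Fgraph.isOpenIrredSet_lefts, Fgraph.card_lefts⟩, ?_⟩
  rintro k ⟨S, hS, rfl⟩
  exact Fgraph.card_le_of_isOpenIrredSet hS
end

section
/- Let CK_n be two disjoint copies of K_n joined by a perfect matching. Then for every vertex v of CK_n, the maximum size of an irredundant set containing v equals n; hence the irredundance saturation number IRS(CK_n) = n. -/
open Finset

variable {V : Type*}

/-! The cliques `A = {aᵢ}` and `B = {bᵢ}` are irredundant sets of size `n` (the private
neighbour of `aᵢ` relative to `A` is `bᵢ`), and every vertex lies in one of them.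
Conversely, if an irredundant set `S` meets both cliques, say in `aᵢ` and `bⱼ`, the
private neighbour of `aᵢ` avoids `N[bⱼ] ⊇ B`, so it is some `aₗ` with `l ≠ j` (whence `n
≥ 2`); as `A` lies in the closed neighbourhood of each of its vertices, `aᵢ` is the only
vertex of `S` in `A`. Symmetrically for `B`, so `|S| = 2 ≤ n`. -/

theorem SimpleGraph.IsClique.subset_closedNbhd {G : SimpleGraph V} {C : Set V} (hC : G.IsClique C)
    {x : V} (hx : x ∈ C) : C ⊆ closedNbhd G x := by
  intro w hw
  rcases eq_or_ne w x with rfl | hwx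
  · exact Set.mem_insert _ _
  · exact Set.mem_insert_of_mem _ (hC hx hw hwx.symm)

theorem IsIrredSet.eq_of_mem_clique {G : SimpleGraph V} {S : Finset V} (hS : IsIrredSet G S)
    {u v : V} (hu : u ∈ S) (hv : v ∈ S) (hvu : v ≠ u) {C : Set V} (hC : G.IsClique C)
    (hN : closedNbhd G u ⊆ closedNbhd G v ∪ C) :
    (∃ w ∈ C, w ∉ closedNbhd G v) ∧ ∀ x ∈ S, x ∈ C → x = u := by
  obtain ⟨w, hwu, hpriv⟩ := hS u hu
  have hwC : w ∈ C := (hN hwu).resolve_left (hpriv v hv hvu)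
  exact ⟨⟨w, hwC, hpriv v hv hvu⟩, fun x hx hxC =>
    by_contra fun hxu => hpriv x hx hxu (hC.subset_closedNbhd hxC hwC)⟩

theorem IRSv_eq_of_forall_card_le {G : SimpleGraph V} [Fintype V] {v : V} {m : ℕ}
    (hv : ∃ S, IsIrredSet G S ∧ v ∈ S ∧ #S = m) (hm : ∀ S, IsIrredSet G S → #S ≤ m) :
    IRSv G v = m :=
  IsGreatest.csSup_eq ⟨hv, by rintro _ ⟨S, hS, -, rfl⟩; exact hm S hS⟩

namespace CK

variable {n : ℕ} {i j : Fin n}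

@[simp] theorem inl_mem_closedNbhd_inl :
    (.inl j : Fin n ⊕ Fin n) ∈ closedNbhd (CK n) (.inl i) := by
  rcases eq_or_ne j i with rfl | h
  · exact Set.mem_insert _ _
  · exact Set.mem_insert_of_mem _ (by simp [CK, h.symm])

@[simp] theorem inr_mem_closedNbhd_inr :
    (.inr j : Fin n ⊕ Fin n) ∈ closedNbhd (CK n) (.inr i) := by
  rcases eq_or_ne j i with rfl | h
  · exact Set.mem_insert _ _
  · exact Set.mem_insert_of_mem _ (by simp [CK, h.symm])

@[simp] theorem inr_mem_closedNbhd_inl :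
    (.inr j : Fin n ⊕ Fin n) ∈ closedNbhd (CK n) (.inl i) ↔ j = i := by
  simp [closedNbhd, CK, eq_comm]

@[simp] theorem inl_mem_closedNbhd_inr :
    (.inl j : Fin n ⊕ Fin n) ∈ closedNbhd (CK n) (.inr i) ↔ j = i := by
  simp [closedNbhd, CK, eq_comm]

theorem isClique_range_inl : (CK n).IsClique (Set.range Sum.inl) := by
  rintro _ ⟨i, rfl⟩ _ ⟨j, rfl⟩ h
  simpa [CK] using fun hij => h (congrArg Sum.inl hij)

theorem isClique_range_inr : (CK n).IsClique (Set.range Sum.inr) := by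
  rintro _ ⟨i, rfl⟩ _ ⟨j, rfl⟩ h
  simpa [CK] using fun hij => h (congrArg Sum.inr hij)

theorem closedNbhd_inl_subset :
    closedNbhd (CK n) (.inl i) ⊆ closedNbhd (CK n) (.inr j) ∪ Set.range Sum.inl := by
  rintro (k | k) _ <;> simp

theorem closedNbhd_inr_subset :
    closedNbhd (CK n) (.inr i) ⊆ closedNbhd (CK n) (.inl j) ∪ Set.range Sum.inr := by
  rintro (k | k) _ <;> simp

theorem isIrredSet_map_inl : IsIrredSet (CK n) (univ.map .inl) := by
  simp only [IsIrredSet, mem_map, mem_univ, true_and, forall_exists_index, forall_apply_eq_imp_iff]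
  exact fun i => ⟨.inr i, by simp, fun k hk => by simpa [eq_comm] using hk⟩

theorem isIrredSet_map_inr : IsIrredSet (CK n) (univ.map .inr) := by
  simp only [IsIrredSet, mem_map, mem_univ, true_and, forall_exists_index, forall_apply_eq_imp_iff]
  exact fun i => ⟨.inl i, by simp, fun k hk => by simpa [eq_comm] using hk⟩

theorem exists_isIrredSet_mem_card_eq (v : Fin n ⊕ Fin n) :
    ∃ S, IsIrredSet (CK n) S ∧ v ∈ S ∧ #S = n := by
  rcases v with i | i
  · exact ⟨univ.map .inl, isIrredSet_map_inl, by simp, by simp⟩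
  · exact ⟨univ.map .inr, isIrredSet_map_inr, by simp, by simp⟩

theorem card_le_of_isIrredSet {S : Finset (Fin n ⊕ Fin n)} (hS : IsIrredSet (CK n) S) :
    #S ≤ n := by
  rw [← card_toLeft_add_card_toRight]
  rcases S.toLeft.eq_empty_or_nonempty with hA | ⟨i, hi⟩
  · simpa [hA] using card_le_univ S.toRight
  rcases S.toRight.eq_empty_or_nonempty with hB | ⟨j, hj⟩
  · simpa [hB] using card_le_univ S.toLeft
  rw [mem_toLeft] at hi
  rw [mem_toRight] at hj
  obtain ⟨⟨_, ⟨l, rfl⟩, hlj⟩, hA⟩ :=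
    hS.eq_of_mem_clique hi hj (by simp) isClique_range_inl closedNbhd_inl_subset
  obtain ⟨-, hB⟩ := hS.eq_of_mem_clique hj hi (by simp) isClique_range_inr closedNbhd_inr_subset
  have hA1 : #S.toLeft ≤ 1 := card_le_one.2 fun a ha b hb => Sum.inl_injective <|
    (hA _ (mem_toLeft.1 ha) ⟨a, rfl⟩).trans (hA _ (mem_toLeft.1 hb) ⟨b, rfl⟩).symm
  have hB1 : #S.toRight ≤ 1 := card_le_one.2 fun a ha b hb => Sum.inr_injective <|
    (hB _ (mem_toRight.1 ha) ⟨a, rfl⟩).trans (hB _ (mem_toRight.1 hb) ⟨b, rfl⟩).symm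
  have hlj' : l.val ≠ j.val := Fin.val_ne_of_ne (by simpa using hlj)
  omega

end CK

theorem IRS_CK (n : ℕ) :
    (∀ v, IRSv (CK n) v = n) ∧ IRSNum (CK n) = n := by
  have hv : ∀ v, IRSv (CK n) v = n := fun v =>
    IRSv_eq_of_forall_card_le (CK.exists_isIrredSet_mem_card_eq v) fun _ => CK.card_le_of_isIrredSet
  refine ⟨hv, ?_⟩
  rcases n with _ | n
  · exact Nat.iInf_of_empty _
  · simp only [IRSNum, hv, ciInf_const]
end

section
/- Let BS_n^p (n ≥ 1, p ≥ 2) be the bistar-type graph obtained by joining the centers of two disjoint stars K_{1,n} by a path on p vertices (the two ends of the path being the centers). Then the independence saturation number IS(BS_n^p) is at least n+1. -/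
open Finset

variable {V : Type*}

/-- BS_n^p: two disjoint stars K_{1,n} whose centers are joined by a path on p vertices.
`inl i` (i : Fin p) are the path vertices c_1 … c_p, `inr (inl a)` are the n leaves
attached to c_1, and `inr (inr a)` are the n leaves attached to c_p. -/
def BS (n p : ℕ) : SimpleGraph (Fin p ⊕ (Fin n ⊕ Fin n)) :=
  SimpleGraph.fromRel (fun x y => match x, y with
    | .inl i, .inl j => i.val + 1 = j.val
    | .inl i, .inr (.inl _) => i.val = 0
    | .inl i, .inr (.inr _) => i.val = p - 1
    | _, _ => False)

/-! Every vertex of `BS n p` lies in an independent set of size `n + 1`: a path vertex `c_i`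
with `i ≠ 1` together with the `n` leaves at `c_1`, the vertex `c_1` together with the `n`
leaves at `c_p`, and a leaf at `c_1` (resp. `c_p`) together with its sibling leaves and the
opposite end `c_p` (resp. `c_1`), which is not its neighbour because `p ≥ 2`. -/

section IndependenceSaturation

variable [Fintype V] {G : SimpleGraph V}

lemma card_le_ISv {S : Finset V} {v : V} (hS : IsIndepSet G S) (hv : v ∈ S) :
    S.card ≤ ISv G v :=
  le_csSup ⟨Fintype.card V, fun _ ⟨T, _, _, hT⟩ => hT ▸ T.card_le_univ⟩ ⟨S, hS, hv, rfl⟩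

lemma le_ISNum_of_forall_exists [Nonempty V] {k : ℕ}
    (h : ∀ v, ∃ S : Finset V, IsIndepSet G S ∧ v ∈ S ∧ k ≤ S.card) : k ≤ ISNum G :=
  le_ciInf fun v =>
    let ⟨_, hS, hv, hk⟩ := h v
    hk.trans (card_le_ISv hS hv)

end IndependenceSaturation

namespace BS

open Function

variable (n p : ℕ)

def leftLeaves : Finset (Fin p ⊕ (Fin n ⊕ Fin n)) :=
  univ.map (Embedding.inl.trans Embedding.inr)

def rightLeaves : Finset (Fin p ⊕ (Fin n ⊕ Fin n)) :=
  univ.map (Embedding.inr.trans Embedding.inr)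

lemma card_insert_leftLeaves (i : Fin p) : (insert (.inl i) (leftLeaves n p)).card = n + 1 := by
  rw [card_insert_of_notMem (by simp [leftLeaves]), leftLeaves, card_map, card_univ,
    Fintype.card_fin]

lemma card_insert_rightLeaves (i : Fin p) :
    (insert (.inl i) (rightLeaves n p)).card = n + 1 := by
  rw [card_insert_of_notMem (by simp [rightLeaves]), rightLeaves, card_map, card_univ,
    Fintype.card_fin]

lemma isIndepSet_insert_leftLeaves {i : Fin p} (hi : i.val ≠ 0) :
    IsIndepSet (BS n p) (insert (.inl i) (leftLeaves n p)) := by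
  intro u hu v hv
  simp only [leftLeaves, mem_insert, mem_map, mem_univ, true_and] at hu hv
  rcases hu with rfl | ⟨a, rfl⟩ <;> rcases hv with rfl | ⟨b, rfl⟩ <;>
    simp [BS, SimpleGraph.fromRel_adj, hi]

lemma isIndepSet_insert_rightLeaves {i : Fin p} (hi : i.val ≠ p - 1) :
    IsIndepSet (BS n p) (insert (.inl i) (rightLeaves n p)) := by
  intro u hu v hv
  simp only [rightLeaves, mem_insert, mem_map, mem_univ, true_and] at hu hv
  rcases hu with rfl | ⟨a, rfl⟩ <;> rcases hv with rfl | ⟨b, rfl⟩ <;>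
    simp [BS, SimpleGraph.fromRel_adj, hi]

lemma exists_isIndepSet_mem_card (hp : 2 ≤ p) (v : Fin p ⊕ (Fin n ⊕ Fin n)) :
    ∃ S, IsIndepSet (BS n p) S ∧ v ∈ S ∧ n + 1 ≤ S.card := by
  rcases v with i | a | a
  · by_cases hi : i.val = 0
    · exact ⟨_, isIndepSet_insert_rightLeaves n p (by omega), mem_insert_self _ _,
        (card_insert_rightLeaves n p i).ge⟩
    · exact ⟨_, isIndepSet_insert_leftLeaves n p hi, mem_insert_self _ _,
        (card_insert_leftLeaves n p i).ge⟩
  · exact ⟨_, isIndepSet_insert_leftLeaves n p (i := ⟨p - 1, by omega⟩) (by simp only; omega),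
      by simp [leftLeaves], (card_insert_leftLeaves n p _).ge⟩
  · exact ⟨_, isIndepSet_insert_rightLeaves n p (i := ⟨0, by omega⟩) (by simp only; omega),
      by simp [rightLeaves], (card_insert_rightLeaves n p _).ge⟩

end BS

theorem IS_BS_general (n p : ℕ) (hp : 2 ≤ p) :
    n + 1 ≤ ISNum (BS n p) := by
  have : Nonempty (Fin p ⊕ (Fin n ⊕ Fin n)) := ⟨.inl ⟨0, by omega⟩⟩
  exact le_ISNum_of_forall_exists (BS.exists_isIndepSet_mem_card n p hp)

theorem IS_BS (n p : ℕ) (hn : 1 ≤ n) (hp : 2 ≤ p) :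
    n + 1 ≤ ISNum (BS n p) :=
  IS_BS_general n p hp
end
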